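/- arXiv:math-ph/0312058 — 3 statements merged into one kernel-verified Lean document; each statement's English description precedes it below -/
import Mathlib

section
/- Let the logarithmic reduction data depend differentiably on (x,t) ∈ ℝ² (′ denotes ∂/∂x, subscript t denotes ∂/∂t), and suppose the string equation holds for every (x,t). Fix j ∈ {0,1,…,n+1}, define F⁰_w := r, F⁰_x := r′w + u′/2, and for j ≥ 1, F^j_w := 1/(w − w_j), F^j_x := w_j′/(w_j − w) + (1/2)(r′/r − w_j′/w_j), and assume the τ_j-flow equations hold: for every (x,t) and every admissible w, r_t w + u_t + Σᵢ aᵢ w_{i,t}/(wᵢ − w) = w·F^j_w·Z_x − w·F^j_x·Z_w and r_t/w + ū_t + Σᵢ āᵢ w̄_{i,t}/(w̄ᵢ − 1/w) = w·F^j_w·Z̄_x − w·F^j_x·Z̄_w. Then u_t + Σ_l a_l w_{l,t}/w_l = 0, and for every k ∈ {1,…,n+1}: ā_k·[ r_t/w̄_k − r·w̄_{k,t}/w̄_k² + u_t + Σ_l a_l·(w_{l,t} + w̄_{k,t}/w̄_k²)/(w_l − 1/w̄_k) ] = 0. (That is, ∂_{τ_j} Ī_k = 0 for the conjugate linearizing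 variables Ī₀ = u + Σ a_l log w_l and Ī_k = ā_k·z evaluated at w = 1/w̄_k.) -/
/-!
At a fixed `(x, t)` all of `Z_w, Z_x, Z̄_w, Z̄_x, F^j_w, F^j_x` are rational in `w`, and the string
and flow equations hold off finitely many points, so they survive limits along punctured
neighbourhoods. At `w = 0` the right side of the `z`-flow equation vanishes, which is the first
claim. At `w₀ = 1/w̄_k` the functions `Z̄_w`, `Z̄_x` and the left side of the `z̄`-flow equation have
simple poles, with residues `ρ_w = ā_k`, `ρ_x` and `ρ_t = ā_k w̄_{k,t} w₀²`. The residue of the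
string equation gives `Z_w ρ_x = Z_x ρ_w` at `w₀`; combined with the residue of the `z̄`-flow
equation and the value of the `z`-flow equation at `w₀` it gives
`ρ_w · (r_t w₀ + u_t + Σ aᵢ wᵢ,ₜ/(wᵢ - w₀)) = ρ_t · Z_w(w₀)`, which is the second claim.
-/

open Finset Filter Topology

section PuncturedNhds

variable {X : Type*} [TopologicalSpace X]

theorem eventually_nhdsNE_ne [T1Space X] (x c : X) : ∀ᶠ w in 𝓝[≠] x, w ≠ c := by
  rcases eq_or_ne x c with rfl | h
  · exact eventually_mem_nhdsWithin
  · exact eventually_ne_nhdsWithin h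

theorem eventually_nhdsNE_of_forall_ne [T1Space X] {ι : Type*} (x c : X) (s : Finset ι)
    (p q : ι → X) {P : X → Prop}
    (h : ∀ w, w ≠ c → (∀ i ∈ s, w ≠ p i) → (∀ i ∈ s, w ≠ q i) → P w) :
    ∀ᶠ w in 𝓝[≠] x, P w := by
  filter_upwards [eventually_nhdsNE_ne x c,
    (eventually_all_finset s).2 fun i _ => eventually_nhdsNE_ne x (p i),
    (eventually_all_finset s).2 fun i _ => eventually_nhdsNE_ne x (q i)] with w hc hp hq
  exact h w hc hp hq

theorem ContinuousAt.eq_of_eventuallyEq_nhdsNE {Y : Type*} [TopologicalSpace Y] [T2Space Y]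
    {x : X} [(𝓝[≠] x).NeBot] {f g : X → Y} (hf : ContinuousAt f x) (hg : ContinuousAt g x)
    (h : f =ᶠ[𝓝[≠] x] g) : f x = g x :=
  ((hf.eventuallyEq_nhds_iff_eventuallyEq_nhdsNE hg).1 h).eq_of_nhds

end PuncturedNhds

theorem sum_mul_add_div_sub {K ι : Type*} [Field K] (s : Finset ι) (a t p : ι → K) (β w : K) :
    ∑ i ∈ s, a i * (t i + β) / (p i - w)
      = ∑ i ∈ s, a i * t i / (p i - w) - β * ∑ i ∈ s, a i / (w - p i) := by
  rw [mul_sum, ← sum_sub_distrib]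
  refine sum_congr rfl fun i _ => ?_
  rw [← neg_sub (p i), div_neg]
  ring

section RationalLimits

variable {𝕜 : Type*} [NontriviallyNormedField 𝕜]

theorem continuousAt_const_add_sum_div_sub {ι : Type*} (s : Finset ι) (β : 𝕜) (c p : ι → 𝕜)
    {w₀ : 𝕜} (h : ∀ i ∈ s, p i ≠ w₀) :
    ContinuousAt (fun w => β + ∑ i ∈ s, c i / (w - p i)) w₀ :=
  continuousAt_const.add <| tendsto_finsetSum _ fun i hi =>
    continuousAt_const.div (continuousAt_id.sub continuousAt_const) (sub_ne_zero.2 (h i hi).symm)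

theorem continuousAt_affine_add_sum_div_sub {ι : Type*} (s : Finset ι) (α β : 𝕜) (c p : ι → 𝕜)
    {w₀ : 𝕜} (h : ∀ i ∈ s, p i ≠ w₀) :
    ContinuousAt (fun w => α * w + β + ∑ i ∈ s, c i / (p i - w)) w₀ :=
  (continuousAt_const.mul continuousAt_id).add continuousAt_const |>.add <|
    tendsto_finsetSum _ fun i hi =>
      continuousAt_const.div (continuousAt_const.sub continuousAt_id) (sub_ne_zero.2 (h i hi))

theorem tendsto_sub_inv_mul_div_sub_one_div {b : 𝕜} (hb : b ≠ 0) {c : 𝕜 → 𝕜}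
    (hc : ContinuousAt c b⁻¹) :
    Tendsto (fun w => (w - b⁻¹) * (c w / (b - 1 / w))) (𝓝[≠] b⁻¹) (𝓝 (c b⁻¹ * b⁻¹ ^ 2)) := by
  have hlim : Tendsto (fun w => c w * w / b) (𝓝[≠] b⁻¹) (𝓝 (c b⁻¹ * b⁻¹ / b)) :=
    ((hc.tendsto.mul tendsto_id).div_const b).mono_left nhdsWithin_le_nhds
  rw [show c b⁻¹ * b⁻¹ ^ 2 = c b⁻¹ * b⁻¹ / b by ring]
  refine hlim.congr' ?_
  filter_upwards [eventually_nhdsNE_ne b⁻¹ 0, eventually_mem_nhdsWithin] with w hw0 hw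
  have hwb : w * b - 1 ≠ 0 := by
    rw [sub_ne_zero]
    exact fun h => hw (eq_inv_of_mul_eq_one_left h)
  rw [show b - 1 / w = (w * b - 1) / w by field_simp, show w - b⁻¹ = (w * b - 1) / b by field_simp]
  field_simp

theorem tendsto_sub_inv_mul_add_sum_div_sub_one_div {ι : Type*} {s : Finset ι} {k : ι}
    (hk : k ∈ s) {b : ι → 𝕜} (hb : b k ≠ 0) (hinj : ∀ i ∈ s, i ≠ k → b i ≠ b k)
    {g : 𝕜 → 𝕜} (hg : ContinuousAt g (b k)⁻¹) {c : ι → 𝕜 → 𝕜}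
    (hc : ∀ i ∈ s, ContinuousAt (c i) (b k)⁻¹) :
    Tendsto (fun w => (w - (b k)⁻¹) * (g w + ∑ i ∈ s, c i w / (b i - 1 / w)))
      (𝓝[≠] (b k)⁻¹) (𝓝 (c k (b k)⁻¹ * (b k)⁻¹ ^ 2)) := by
  classical
  have hreg : ContinuousAt (fun w => g w + ∑ i ∈ s.erase k, c i w / (b i - 1 / w)) (b k)⁻¹ :=
    hg.add <| tendsto_finsetSum _ fun i hi =>
      (hc i (mem_of_mem_erase hi)).div
        (continuousAt_const.sub (continuousAt_const.div continuousAt_id (inv_ne_zero hb)))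
        (by rw [one_div, inv_inv, sub_ne_zero]
            exact hinj i (mem_of_mem_erase hi) (ne_of_mem_erase hi))
  have hreg0 : Tendsto (fun w => (w - (b k)⁻¹) * (g w + ∑ i ∈ s.erase k, c i w / (b i - 1 / w)))
      (𝓝[≠] (b k)⁻¹) (𝓝 0) := by
    have h := ((tendsto_id.sub_const (b k)⁻¹).mul hreg.tendsto).mono_left
      (nhdsWithin_le_nhds (s := {(b k)⁻¹}ᶜ))
    rwa [sub_self, zero_mul] at h
  convert hreg0.add (tendsto_sub_inv_mul_div_sub_one_div hb (hc k hk)) using 1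
  · ext w
    rw [← add_sum_erase s _ hk]
    ring
  · rw [zero_add]

theorem continuousAt_flow_generators {j : ℕ} {r rx ux p px w₀ : 𝕜} (h : j ≠ 0 → p ≠ w₀) :
    ContinuousAt (fun w => if j = 0 then r else (w - p)⁻¹) w₀ ∧
      ContinuousAt (fun w => if j = 0 then rx * w + ux / 2 else
        px / (p - w) + 1 / 2 * (rx / r - px / p)) w₀ := by
  by_cases hj : j = 0
  · simp only [hj, if_true]
    exact ⟨continuousAt_const, by fun_prop⟩
  · simp only [hj, if_false]
    exact ⟨(continuousAt_id.sub continuousAt_const).inv₀ (sub_ne_zero.2 (h hj).symm),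
      (continuousAt_const.div (continuousAt_const.sub continuousAt_id)
        (sub_ne_zero.2 (h hj))).add continuousAt_const⟩

theorem residue_flow_identity {w₀ ρw ρx ρt : 𝕜} {Zw Zx Zbw Zbx Fw Fx Φ Ψ : 𝕜 → 𝕜}
    (hZw : ContinuousAt Zw w₀) (hZx : ContinuousAt Zx w₀) (hFw : ContinuousAt Fw w₀)
    (hFx : ContinuousAt Fx w₀) (hΦ : ContinuousAt Φ w₀)
    (hρw : Tendsto (fun w => (w - w₀) * Zbw w) (𝓝[≠] w₀) (𝓝 ρw))
    (hρx : Tendsto (fun w => (w - w₀) * Zbx w) (𝓝[≠] w₀) (𝓝 ρx))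
    (hρt : Tendsto (fun w => (w - w₀) * Ψ w) (𝓝[≠] w₀) (𝓝 ρt))
    (hstring : ∀ᶠ w in 𝓝[≠] w₀, w * Zw w * Zbx w - w * Zx w * Zbw w = 1)
    (hflow : ∀ᶠ w in 𝓝[≠] w₀, Φ w = w * Fw w * Zx w - w * Fx w * Zw w)
    (hflowbar : ∀ᶠ w in 𝓝[≠] w₀, Ψ w = w * Fw w * Zbx w - w * Fx w * Zbw w) :
    ρw * Φ w₀ = ρt * Zw w₀ := by
  have hid : Tendsto (fun w => w) (𝓝[≠] w₀) (𝓝 w₀) := tendsto_id.mono_left nhdsWithin_le_nhds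
  have hlim {f : 𝕜 → 𝕜} (hf : ContinuousAt f w₀) : Tendsto f (𝓝[≠] w₀) (𝓝 (f w₀)) :=
    hf.tendsto.mono_left nhdsWithin_le_nhds
  have hres : w₀ * Zw w₀ * ρx - w₀ * Zx w₀ * ρw = 0 := by
    have h0 : Tendsto (fun w => w - w₀) (𝓝[≠] w₀) (𝓝 0) := by simpa using hid.sub_const w₀
    refine tendsto_nhds_unique (((hid.mul (hlim hZw)).mul hρx).sub ((hid.mul (hlim hZx)).mul hρw))
      (h0.congr' ?_)
    filter_upwards [hstring] with w hs
    linear_combination (w₀ - w) * hs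
  have hρt' : ρt = w₀ * Fw w₀ * ρx - w₀ * Fx w₀ * ρw := by
    refine tendsto_nhds_unique hρt ((((hid.mul (hlim hFw)).mul hρx).sub
      ((hid.mul (hlim hFx)).mul hρw)).congr' ?_)
    filter_upwards [hflowbar] with w hΨ
    rw [hΨ]
    ring
  have hΦ₀ : Φ w₀ = w₀ * Fw w₀ * Zx w₀ - w₀ * Fx w₀ * Zw w₀ :=
    hΦ.eq_of_eventuallyEq_nhdsNE (by fun_prop) hflow
  rw [hΦ₀, hρt']
  linear_combination (-Fw w₀) * hres

end RationalLimits

theorem tau_flow_conjugate_linearizing_variables_Ibar_general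
    (n : ℕ) (a abar : ℕ → ℂ)
    (r : ℝ → ℝ → ℂ) (W Wb : ℕ → ℝ → ℝ → ℂ)
    -- ∂/∂x and ∂/∂t of the data
    (rx ux ubarx rt ut ubart : ℝ → ℝ → ℂ) (Wx Wbx Wt Wbt : ℕ → ℝ → ℝ → ℂ)
    (hW0 : ∀ i ∈ Finset.Icc 1 (n + 1), ∀ x t : ℝ, W i x t ≠ 0)
    (hWb0 : ∀ i ∈ Finset.Icc 1 (n + 1), ∀ x t : ℝ, Wb i x t ≠ 0)
    (hWbdist : ∀ i ∈ Finset.Icc 1 (n + 1), ∀ j ∈ Finset.Icc 1 (n + 1), i ≠ j →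
      ∀ x t : ℝ, Wb i x t ≠ Wb j x t)
    (hWWb : ∀ i ∈ Finset.Icc 1 (n + 1), ∀ j ∈ Finset.Icc 1 (n + 1),
      ∀ x t : ℝ, W i x t * Wb j x t ≠ 1)
    -- the rational (in w) partial derivatives of z and z̄
    (Zw Zx Zbw Zbx : ℝ → ℝ → ℂ → ℂ)
    (hZw : ∀ x t w, Zw x t w = r x t + ∑ i ∈ Finset.Icc 1 (n + 1), a i / (w - W i x t))
    (hZx : ∀ x t w, Zx x t w =
      rx x t * w + ux x t + ∑ i ∈ Finset.Icc 1 (n + 1), a i * Wx i x t / (W i x t - w))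
    (hZbw : ∀ x t w, Zbw x t w =
      - r x t / w ^ 2 + ∑ i ∈ Finset.Icc 1 (n + 1), abar i / (w ^ 2 * (Wb i x t - 1 / w)))
    (hZbx : ∀ x t w, Zbx x t w =
      rx x t / w + ubarx x t
        + ∑ i ∈ Finset.Icc 1 (n + 1), abar i * Wbx i x t / (Wb i x t - 1 / w))
    -- the string equation
    (hstring : ∀ (x t : ℝ) (w : ℂ), w ≠ 0 → (∀ j ∈ Finset.Icc 1 (n + 1), w ≠ W j x t) →
      (∀ j ∈ Finset.Icc 1 (n + 1), w ≠ (Wb j x t)⁻¹) →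
      w * Zw x t w * Zbx x t w - w * Zx x t w * Zbw x t w = 1)
    -- the fixed index j and the derivatives F^j of the evolution function 𝓗_j
    (j : ℕ) (hj : j ≤ n + 1)
    (Fw Fx : ℝ → ℝ → ℂ → ℂ)
    (hFw : ∀ x t w, Fw x t w = if j = 0 then r x t else (w - W j x t)⁻¹)
    (hFx : ∀ x t w, Fx x t w = if j = 0 then rx x t * w + ux x t / 2 else
      Wx j x t / (W j x t - w) + (1 / 2) * (rx x t / r x t - Wx j x t / W j x t))
    -- the τ_j-flow equations for z and z̄
    (hflowz : ∀ (x t : ℝ) (w : ℂ), w ≠ 0 → (∀ i ∈ Finset.Icc 1 (n + 1), w ≠ W i x t) →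
      (∀ i ∈ Finset.Icc 1 (n + 1), w ≠ (Wb i x t)⁻¹) →
      rt x t * w + ut x t + ∑ i ∈ Finset.Icc 1 (n + 1), a i * Wt i x t / (W i x t - w)
        = w * Fw x t w * Zx x t w - w * Fx x t w * Zw x t w)
    (hflowzbar : ∀ (x t : ℝ) (w : ℂ), w ≠ 0 → (∀ i ∈ Finset.Icc 1 (n + 1), w ≠ W i x t) →
      (∀ i ∈ Finset.Icc 1 (n + 1), w ≠ (Wb i x t)⁻¹) →
      rt x t / w + ubart x t
          + ∑ i ∈ Finset.Icc 1 (n + 1), abar i * Wbt i x t / (Wb i x t - 1 / w)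
        = w * Fw x t w * Zbx x t w - w * Fx x t w * Zbw x t w) :
    ∀ x t : ℝ,
      (ut x t + ∑ l ∈ Finset.Icc 1 (n + 1), a l * Wt l x t / W l x t = 0) ∧
      ∀ k ∈ Finset.Icc 1 (n + 1),
        abar k * (rt x t / Wb k x t - r x t * Wbt k x t / (Wb k x t) ^ 2 + ut x t
          + ∑ l ∈ Finset.Icc 1 (n + 1),
              a l * (Wt l x t + Wbt k x t / (Wb k x t) ^ 2) / (W l x t - 1 / Wb k x t))
          = 0 := by
  intro x t
  set E := Finset.Icc 1 (n + 1)
  have hcont : ∀ w₀, (∀ i ∈ E, W i x t ≠ w₀) →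
      ContinuousAt (Zw x t) w₀ ∧ ContinuousAt (Zx x t) w₀ ∧ ContinuousAt (Fw x t) w₀ ∧
        ContinuousAt (Fx x t) w₀ := by
    intro w₀ hw₀
    rw [funext (hZw x t), funext (hZx x t), funext (hFw x t), funext (hFx x t)]
    exact ⟨continuousAt_const_add_sum_div_sub E _ _ _ hw₀,
      continuousAt_affine_add_sum_div_sub E _ _ _ _ hw₀,
      continuousAt_flow_generators fun hj0 =>
        hw₀ j (mem_Icc.2 ⟨Nat.one_le_iff_ne_zero.2 hj0, hj⟩)⟩
  refine ⟨?_, fun k hk => ?_⟩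
  · obtain ⟨hZw0, hZx0, hFw0, hFx0⟩ := hcont 0 fun i hi => hW0 i hi x t
    have h := (continuousAt_affine_add_sum_div_sub E (rt x t) (ut x t) _ _
      fun i hi => hW0 i hi x t).eq_of_eventuallyEq_nhdsNE (by fun_prop)
      (eventually_nhdsNE_of_forall_ne 0 0 E _ _ (hflowz x t))
    simpa using h
  · set w₀ := (Wb k x t)⁻¹ with hw₀
    have hWb : Wb k x t ≠ 0 := hWb0 k hk x t
    have hWw₀ : ∀ i ∈ E, W i x t ≠ w₀ := fun i hi h =>
      hWWb i hi k hk x t (by rw [h, inv_mul_cancel₀ hWb])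
    have hpole {g : ℂ → ℂ} {c : ℕ → ℂ → ℂ} :=
      tendsto_sub_inv_mul_add_sum_div_sub_one_div hk (b := fun i => Wb i x t) (g := g) (c := c)
        hWb fun i hi hik => hWbdist i hi k hk hik x t
    obtain ⟨hZw0, hZx0, hFw0, hFx0⟩ := hcont w₀ hWw₀
    have hres := residue_flow_identity hZw0 hZx0 hFw0 hFx0
      (continuousAt_affine_add_sum_div_sub E (rt x t) (ut x t) _ _ hWw₀)
      (by simpa only [hZbw, ← div_div] using hpole (c := fun i w => abar i / w ^ 2)
            (by fun_prop (disch := simp [hWb])) fun i _ => by fun_prop (disch := simp [hWb]))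
      (by simpa only [hZbx] using hpole (c := fun i _ => abar i * Wbx i x t)
            (by fun_prop (disch := simp [hWb])) fun i _ => continuousAt_const)
      (hpole (c := fun i _ => abar i * Wbt i x t)
        (by fun_prop (disch := simp [hWb])) fun i _ => continuousAt_const)
      (eventually_nhdsNE_of_forall_ne w₀ 0 E _ _ (hstring x t))
      (eventually_nhdsNE_of_forall_ne w₀ 0 E _ _ (hflowz x t))
      (eventually_nhdsNE_of_forall_ne w₀ 0 E _ _ (hflowzbar x t))
    rw [div_mul_cancel₀ _ (pow_ne_zero 2 (inv_ne_zero hWb)), hZw, hw₀] at hres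
    rw [one_div, sum_mul_add_div_sub]
    linear_combination hres

/-- for the logarithmic reduction evolving under the `τ_j`-flow and
constrained by the string equation, the conjugate linearizing variables
`Ī₀ = u + Σ a_l log w_l` and `Ī_k = ā_k·z(1/w̄_k)` satisfy `∂_{τ_j} Ī_k = 0`. -/
theorem tau_flow_conjugate_linearizing_variables_Ibar
    (n : ℕ) (a abar : ℕ → ℂ)
    (r u ubar : ℝ → ℝ → ℂ) (W Wb : ℕ → ℝ → ℝ → ℂ)
    -- ∂/∂x and ∂/∂t of the data
    (rx ux ubarx rt ut ubart : ℝ → ℝ → ℂ) (Wx Wbx Wt Wbt : ℕ → ℝ → ℝ → ℂ)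
    (ha : ∀ i ∈ Finset.Icc 1 (n + 1), a i ≠ 0)
    (habar : ∀ i ∈ Finset.Icc 1 (n + 1), abar i ≠ 0)
    (hasum : ∑ i ∈ Finset.Icc 1 (n + 1), a i = 0)
    (habarsum : ∑ i ∈ Finset.Icc 1 (n + 1), abar i = 0)
    (hr0 : ∀ x t : ℝ, r x t ≠ 0)
    (hW0 : ∀ i ∈ Finset.Icc 1 (n + 1), ∀ x t : ℝ, W i x t ≠ 0)
    (hWb0 : ∀ i ∈ Finset.Icc 1 (n + 1), ∀ x t : ℝ, Wb i x t ≠ 0)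
    (hWdist : ∀ i ∈ Finset.Icc 1 (n + 1), ∀ j ∈ Finset.Icc 1 (n + 1), i ≠ j →
      ∀ x t : ℝ, W i x t ≠ W j x t)
    (hWbdist : ∀ i ∈ Finset.Icc 1 (n + 1), ∀ j ∈ Finset.Icc 1 (n + 1), i ≠ j →
      ∀ x t : ℝ, Wb i x t ≠ Wb j x t)
    (hWWb : ∀ i ∈ Finset.Icc 1 (n + 1), ∀ j ∈ Finset.Icc 1 (n + 1),
      ∀ x t : ℝ, W i x t * Wb j x t ≠ 1)
    (hdrx : ∀ x t, HasDerivAt (fun y => r y t) (rx x t) x)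
    (hdrt : ∀ x t, HasDerivAt (fun s => r x s) (rt x t) t)
    (hdux : ∀ x t, HasDerivAt (fun y => u y t) (ux x t) x)
    (hdut : ∀ x t, HasDerivAt (fun s => u x s) (ut x t) t)
    (hdubarx : ∀ x t, HasDerivAt (fun y => ubar y t) (ubarx x t) x)
    (hdubart : ∀ x t, HasDerivAt (fun s => ubar x s) (ubart x t) t)
    (hdWx : ∀ i ∈ Finset.Icc 1 (n + 1), ∀ x t, HasDerivAt (fun y => W i y t) (Wx i x t) x)
    (hdWt : ∀ i ∈ Finset.Icc 1 (n + 1), ∀ x t, HasDerivAt (fun s => W i x s) (Wt i x t) t)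
    (hdWbx : ∀ i ∈ Finset.Icc 1 (n + 1), ∀ x t, HasDerivAt (fun y => Wb i y t) (Wbx i x t) x)
    (hdWbt : ∀ i ∈ Finset.Icc 1 (n + 1), ∀ x t, HasDerivAt (fun s => Wb i x s) (Wbt i x t) t)
    -- the rational (in w) partial derivatives of z and z̄
    (Zw Zx Zbw Zbx : ℝ → ℝ → ℂ → ℂ)
    (hZw : ∀ x t w, Zw x t w = r x t + ∑ i ∈ Finset.Icc 1 (n + 1), a i / (w - W i x t))
    (hZx : ∀ x t w, Zx x t w =
      rx x t * w + ux x t + ∑ i ∈ Finset.Icc 1 (n + 1), a i * Wx i x t / (W i x t - w))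
    (hZbw : ∀ x t w, Zbw x t w =
      - r x t / w ^ 2 + ∑ i ∈ Finset.Icc 1 (n + 1), abar i / (w ^ 2 * (Wb i x t - 1 / w)))
    (hZbx : ∀ x t w, Zbx x t w =
      rx x t / w + ubarx x t
        + ∑ i ∈ Finset.Icc 1 (n + 1), abar i * Wbx i x t / (Wb i x t - 1 / w))
    -- the string equation
    (hstring : ∀ (x t : ℝ) (w : ℂ), w ≠ 0 → (∀ j ∈ Finset.Icc 1 (n + 1), w ≠ W j x t) →
      (∀ j ∈ Finset.Icc 1 (n + 1), w ≠ (Wb j x t)⁻¹) →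
      w * Zw x t w * Zbx x t w - w * Zx x t w * Zbw x t w = 1)
    -- the fixed index j and the derivatives F^j of the evolution function 𝓗_j
    (j : ℕ) (hj : j ≤ n + 1)
    (Fw Fx : ℝ → ℝ → ℂ → ℂ)
    (hFw : ∀ x t w, Fw x t w = if j = 0 then r x t else (w - W j x t)⁻¹)
    (hFx : ∀ x t w, Fx x t w = if j = 0 then rx x t * w + ux x t / 2 else
      Wx j x t / (W j x t - w) + (1 / 2) * (rx x t / r x t - Wx j x t / W j x t))
    -- the τ_j-flow equations for z and z̄
    (hflowz : ∀ (x t : ℝ) (w : ℂ), w ≠ 0 → (∀ i ∈ Finset.Icc 1 (n + 1), w ≠ W i x t) →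
      (∀ i ∈ Finset.Icc 1 (n + 1), w ≠ (Wb i x t)⁻¹) →
      rt x t * w + ut x t + ∑ i ∈ Finset.Icc 1 (n + 1), a i * Wt i x t / (W i x t - w)
        = w * Fw x t w * Zx x t w - w * Fx x t w * Zw x t w)
    (hflowzbar : ∀ (x t : ℝ) (w : ℂ), w ≠ 0 → (∀ i ∈ Finset.Icc 1 (n + 1), w ≠ W i x t) →
      (∀ i ∈ Finset.Icc 1 (n + 1), w ≠ (Wb i x t)⁻¹) →
      rt x t / w + ubart x t
          + ∑ i ∈ Finset.Icc 1 (n + 1), abar i * Wbt i x t / (Wb i x t - 1 / w)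
        = w * Fw x t w * Zbx x t w - w * Fx x t w * Zbw x t w) :
    ∀ x t : ℝ,
      (ut x t + ∑ l ∈ Finset.Icc 1 (n + 1), a l * Wt l x t / W l x t = 0) ∧
      ∀ k ∈ Finset.Icc 1 (n + 1),
        abar k * (rt x t / Wb k x t - r x t * Wbt k x t / (Wb k x t) ^ 2 + ut x t
          + ∑ l ∈ Finset.Icc 1 (n + 1),
              a l * (Wt l x t + Wbt k x t / (Wb k x t) ^ 2) / (W l x t - 1 / Wb k x t))
          = 0 :=
  tau_flow_conjugate_linearizing_variables_Ibar_general n a abar r W Wb rx ux ubarx rt ut ubart Wx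
    Wbx Wt Wbt hW0 hWb0 hWbdist hWWb Zw Zx Zbw Zbx hZw hZx hZbw hZbx hstring j hj Fw Fx hFw hFx
    hflowz hflowzbar
end

section
/- Let A be a commutative ℚ-algebra with derivation d : A → A, and let z, z̄ ∈ A[w,w⁻¹] satisfy the string equation {z, z̄} = 1. Define Q := (1/2)·( c₋₁(z̄·∂_w z) − c₋₁(z·∂_w z̄) ) ∈ A. Then d(Q) = 1; i.e., the Casimir Q (the area variable of the Laplacian growth problem) grows linearly with unit speed in the variable x. -/
open LaurentPolynomial

/-- The derivation `d : A → A` extended coefficientwise to Laurent polynomials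
(so that `d w = 0`). -/
noncomputable def dmap {A : Type*} [CommRing A] (d : A → A) (f : LaurentPolynomial A) :
    LaurentPolynomial A :=
  f.coeff.sum fun n a => C (d a) * T n

/-- The formal derivative `∂_w` on Laurent polynomials. -/
noncomputable def wderiv {A : Type*} [CommRing A] (f : LaurentPolynomial A) :
    LaurentPolynomial A :=
  f.coeff.sum fun n a => C (n • a) * T (n - 1)

/-- The Lax–Poisson bracket `{f,g} = w·(∂_w f)·(d g) − w·(d f)·(∂_w g)`. -/
noncomputable def lax {A : Type*} [CommRing A] (d : A → A) (f g : LaurentPolynomial A) :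
    LaurentPolynomial A :=
  T 1 * wderiv f * dmap d g - T 1 * dmap d f * wderiv g

/-!
Extending `d` coefficientwise gives a derivation of `A[w,w⁻¹]` commuting with `∂_w`, and the
residue of a total `w`-derivative vanishes. Integrating by parts,
`d c₋₁(f ∂_w g) = c₋₁(d f · ∂_w g) − c₋₁(∂_w f · d g)`, so `d` of the antisymmetrised residue
`c₋₁(g ∂_w f) − c₋₁(f ∂_w g)` is `2 c₋₁(∂_w f · d g − d f · ∂_w g) = 2 c₀{f, g}`,
which is `2` under the string equation.
-/

namespace LaurentPolynomial

variable {R : Type*} [Semiring R]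

theorem C_mul_T_mul_C_mul_T (a b : R) (m n : ℤ) :
    C a * T m * (C b * T n) = C (a * b) * T (m + n) := by
  simp only [← single_eq_C_mul_T, AddMonoidAlgebra.single_mul_single]

theorem coeff_T_mul_add (f : R[T;T⁻¹]) (m n : ℤ) : (T m * f).coeff (m + n) = f.coeff n := by
  rw [T, AddMonoidAlgebra.coeff_single_mul_add, one_mul]

theorem leibniz_of_C_mul_T {φ : R[T;T⁻¹] → R[T;T⁻¹]} (hadd : ∀ f g, φ (f + g) = φ f + φ g)
    (hmono : ∀ (a b : R) (m n : ℤ),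
      φ (C a * T m * (C b * T n)) = C a * T m * φ (C b * T n) + φ (C a * T m) * (C b * T n))
    (f g : R[T;T⁻¹]) : φ (f * g) = f * φ g + φ f * g := by
  induction f using LaurentPolynomial.induction_on' with
  | add p q hp hq => rw [add_mul, hadd, hp, hq, hadd]; noncomm_ring
  | C_mul_T m a =>
    induction g using LaurentPolynomial.induction_on' with
    | add p q hp hq => rw [mul_add, hadd, hp, hq, hadd]; noncomm_ring
    | C_mul_T n b => exact hmono a b m n

end LaurentPolynomial

section

variable {A : Type*} [CommRing A]

theorem coeff_wderiv (f : A[T;T⁻¹]) (n : ℤ) :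
    (wderiv f).coeff n = (n + 1) • f.coeff (n + 1) := by
  rw [wderiv, AddMonoidAlgebra.coeff_finsuppSum, Finsupp.sum_apply]
  have hmono (m : ℤ) (a : A) :
      (C (m • a) * T (m - 1)).coeff n = if m = n + 1 then m • a else 0 := by
    rw [← single_eq_C_mul_T, AddMonoidAlgebra.coeff_single, Finsupp.single_apply]
    simp only [sub_eq_iff_eq_add]
  simp only [hmono]
  rw [Finsupp.sum_ite_eq']
  split_ifs with h
  · rfl
  · rw [Finsupp.notMem_support_iff.mp h, smul_zero]

theorem wderiv_add (f g : A[T;T⁻¹]) : wderiv (f + g) = wderiv f + wderiv g := by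
  ext n
  simp only [coeff_wderiv, AddMonoidAlgebra.coeff_add, Finsupp.add_apply, smul_add]

theorem wderiv_C_mul_T (a : A) (n : ℤ) : wderiv (C a * T n) = C (n • a) * T (n - 1) := by
  rw [wderiv, ← single_eq_C_mul_T, AddMonoidAlgebra.coeff_single,
    Finsupp.sum_single_index (by rw [smul_zero, map_zero, zero_mul])]

theorem wderiv_mul (f g : A[T;T⁻¹]) : wderiv (f * g) = f * wderiv g + wderiv f * g := by
  refine leibniz_of_C_mul_T wderiv_add (fun a b m n ↦ ?_) f g
  simp only [C_mul_T_mul_C_mul_T, wderiv_C_mul_T]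
  rw [← add_sub_assoc, sub_add_eq_add_sub, ← add_mul, ← map_add, mul_smul_comm, smul_mul_assoc,
    ← add_smul, add_comm n m]

theorem coeff_wderiv_neg_one (f : A[T;T⁻¹]) : (wderiv f).coeff (-1) = 0 := by
  rw [coeff_wderiv, neg_add_cancel, zero_smul]

theorem coeff_mul_wderiv_neg_one (f g : A[T;T⁻¹]) :
    (f * wderiv g).coeff (-1) = -(wderiv f * g).coeff (-1) := by
  have h := coeff_wderiv_neg_one (f * g)
  rw [wderiv_mul, AddMonoidAlgebra.coeff_add, Finsupp.add_apply] at h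
  exact eq_neg_of_add_eq_zero_left h

section AdditiveMap

variable {F : Type*} [FunLike F A A] [AddMonoidHomClass F A A] (D : F)

theorem coeff_dmap (f : A[T;T⁻¹]) (n : ℤ) : (dmap D f).coeff n = D (f.coeff n) := by
  rw [dmap, AddMonoidAlgebra.coeff_finsuppSum]
  simp +contextual [← single_eq_C_mul_T, Finsupp.single_apply]

theorem dmap_add (f g : A[T;T⁻¹]) : dmap D (f + g) = dmap D f + dmap D g := by
  ext n
  simp only [coeff_dmap, AddMonoidAlgebra.coeff_add, Finsupp.add_apply, map_add]

theorem dmap_C_mul_T (a : A) (n : ℤ) : dmap D (C a * T n) = C (D a) * T n := by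
  rw [dmap, ← single_eq_C_mul_T, AddMonoidAlgebra.coeff_single,
    Finsupp.sum_single_index (by rw [map_zero, map_zero, zero_mul])]

theorem dmap_wderiv (f : A[T;T⁻¹]) : dmap D (wderiv f) = wderiv (dmap D f) := by
  ext n
  simp only [coeff_dmap, coeff_wderiv, map_zsmul]

end AdditiveMap

theorem coeff_lax_zero (d : A → A) (f g : A[T;T⁻¹]) :
    (lax d f g).coeff 0 = (wderiv f * dmap d g - dmap d f * wderiv g).coeff (-1) := by
  rw [lax, mul_assoc, mul_assoc, ← mul_sub, ← coeff_T_mul_add _ 1 (-1), add_neg_cancel]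

section Derivation

variable (D : Derivation ℤ A A)

theorem dmap_mul (f g : A[T;T⁻¹]) : dmap D (f * g) = f * dmap D g + dmap D f * g := by
  refine leibniz_of_C_mul_T (dmap_add D) (fun a b m n ↦ ?_) f g
  simp only [C_mul_T_mul_C_mul_T, dmap_C_mul_T, D.leibniz, smul_eq_mul]
  rw [← add_mul, ← map_add, mul_comm b]

theorem map_coeff_mul_wderiv_neg_one (f g : A[T;T⁻¹]) :
    D ((f * wderiv g).coeff (-1)) =
      (dmap D f * wderiv g).coeff (-1) - (wderiv f * dmap D g).coeff (-1) := by
  rw [← coeff_dmap, dmap_mul, dmap_wderiv, AddMonoidAlgebra.coeff_add, Finsupp.add_apply,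
    coeff_mul_wderiv_neg_one]
  ring

theorem map_coeff_sub_eq_two_mul_coeff_lax_zero (f g : A[T;T⁻¹]) :
    D ((g * wderiv f).coeff (-1) - (f * wderiv g).coeff (-1)) = 2 * (lax D f g).coeff 0 := by
  rw [map_sub, map_coeff_mul_wderiv_neg_one, map_coeff_mul_wderiv_neg_one, coeff_lax_zero,
    AddMonoidAlgebra.coeff_sub, Finsupp.sub_apply, mul_comm (dmap D g), mul_comm (wderiv g)]
  ring

end Derivation

end

/-- if `{z, z̄} = 1` then the Casimir
`Q = (1/2)(c₋₁(z̄·∂_w z) − c₋₁(z·∂_w z̄))` satisfies `d Q = 1`, i.e. the area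
variable of the Laplacian growth problem grows with unit speed in `x`. -/
theorem casimir_unit_speed {A : Type*} [CommRing A] [Algebra ℚ A]
    (d : A → A)
    (hd_add : ∀ a b : A, d (a + b) = d a + d b)
    (hd_mul : ∀ a b : A, d (a * b) = a * d b + d a * b)
    (z zbar : LaurentPolynomial A)
    (hstring : lax d z zbar = 1)
    (Q : A)
    (hQ : Q = (1/2 : ℚ) • ((zbar * wderiv z).coeff (-1 : ℤ) - (z * wderiv zbar).coeff (-1 : ℤ))) :
    d Q = 1 := by
  obtain ⟨D, rfl⟩ : ∃ D : Derivation ℤ A A, ⇑D = d :=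
    ⟨Derivation.mk' (AddMonoidHom.mk' d hd_add).toIntLinearMap fun a b ↦ by
      simp [hd_mul, mul_comm], rfl⟩
  rw [hQ, map_rat_smul, map_coeff_sub_eq_two_mul_coeff_lax_zero, hstring,
    AddMonoidAlgebra.coeff_one_zero, mul_one, Algebra.smul_def, ← map_ofNat (algebraMap ℚ A),
    ← map_mul]
  norm_num
end

section
/- For j ∈ {1,…,n+1} define D_j := a_j·[ r′/w_j − r·w_j′/w_j² + ū′ + Σ_l ā_l·(w̄_l′ + w_j′/w_j²)/(w̄_l − 1/w_j) ] and D̄_j := ā_j·[ r′/w̄_j − r·w̄_j′/w̄_j² + u′ + Σ_l a_l·(w_l′ + w̄_j′/w̄_j²)/(w_l − 1/w̄_j) ]. If the string equation holds, then for every x: 2·r·r′ − (1/2)·Σ_{j=1}^{n+1} [ r′·(a_j/w_j + ā_j/w̄_j) − r·(a_j·w_j′/w_j² + ā_j·w̄_j′/w̄_j²) + D_j + D̄_j ] = 1. (That is, the Casimir Q = r² − (1/2)Σ_j ( r(a_j/w_j + ā_j/w̄_j) + I_j + Ī_j ) of the logarithmic reduction satisfies dQ/dx = 1 under the string equation.)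 -/
/-!
The string equation is an identity between rational functions of `w`, so its principal parts
must match everywhere. At a pole `w = wⱼ` of `Z_w` and `Z_x` the residue of the left-hand side is
`aⱼ wⱼ (Z̄_x + wⱼ′ Z̄_w)(wⱼ)`, which is `wⱼ Dⱼ`; hence `Dⱼ = 0`. At `w = 0` the left-hand side has a
simple pole with residue `r Z_x(0)`, so `Z_x(0) = 0`; then `Z_x(w)/w → ∂_w Z_x(0)` and the constant
term reads `2 r r′ − r′ Σ aᵢ/wᵢ + r Σ aᵢwᵢ′/wᵢ² = 1`. The substitution `w ↦ 1/w` exchanges `z` and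
`z̄` and preserves the string equation, giving `D̄ⱼ = 0` and the barred constant-term identity. The
claim is half the sum of the two constant-term identities.
-/

open Finset Filter Topology Bornology

section RationalFunctions

variable {ι 𝕜 : Type*} [NormedField 𝕜]

theorem sub_one_div_ne_zero {b c : 𝕜} (hc : c ≠ 0) (h : c * b ≠ 1) : b - 1 / c ≠ 0 := by
  rw [sub_ne_zero]
  rintro rfl
  exact h (mul_one_div_cancel hc)

theorem continuousAt_sum_div_sub {s : Finset ι} {a p : ι → 𝕜} {c : 𝕜} (hc : ∀ i ∈ s, c ≠ p i) :
    ContinuousAt (fun w => ∑ i ∈ s, a i / (w - p i)) c :=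
  tendsto_finsetSum s fun i hi =>
    continuousAt_const.div (continuousAt_id.sub continuousAt_const) (sub_ne_zero.2 (hc i hi))

theorem tendsto_sub_mul_nhdsNE {f : 𝕜 → 𝕜} {c : 𝕜} (hf : ContinuousAt f c) :
    Tendsto (fun w => (w - c) * f w) (𝓝[≠] c) (𝓝 0) := by
  have h : ContinuousAt (fun w => (w - c) * f w) c :=
    (continuousAt_id.sub continuousAt_const).mul hf
  simpa using h.tendsto.mono_left nhdsWithin_le_nhds

theorem tendsto_sub_mul_sum_div_sub [DecidableEq ι] {s : Finset ι} {a p : ι → 𝕜} {j : ι}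
    (hj : j ∈ s) (hp : ∀ i ∈ s, i ≠ j → p i ≠ p j) :
    Tendsto (fun w => (w - p j) * ∑ i ∈ s, a i / (w - p i)) (𝓝[≠] p j) (𝓝 (a j)) := by
  have hrest : ContinuousAt (fun w => (w - p j) * ∑ i ∈ s.erase j, a i / (w - p i)) (p j) :=
    (continuousAt_id.sub continuousAt_const).mul <| continuousAt_sum_div_sub fun i hi =>
      (hp i (mem_of_mem_erase hi) (ne_of_mem_erase hi)).symm
  have hpole : ∀ᶠ w in 𝓝[≠] p j, a j = (w - p j) * (a j / (w - p j)) :=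
    eventually_mem_nhdsWithin.mono fun w hw => (mul_div_cancel₀ _ (sub_ne_zero.2 hw)).symm
  have h := (hrest.tendsto.mono_left nhdsWithin_le_nhds).add (tendsto_const_nhds.congr' hpole)
  rw [sub_self, zero_mul, zero_add] at h
  refine h.congr fun w => ?_
  rw [← add_sum_erase s _ hj]
  ring

theorem tendsto_sum_div_sub_inv_nhdsNE_zero (s : Finset ι) (a p : ι → 𝕜) :
    Tendsto (fun w => ∑ i ∈ s, a i / (p i - 1 / w)) (𝓝[≠] 0) (𝓝 0) := by
  have h : ∀ i ∈ s, Tendsto (fun w : 𝕜 => a i / (p i - 1 / w)) (𝓝[≠] 0) (𝓝 0) := fun i _ => by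
    have := (tendsto_inv₀_cobounded.comp ((tendsto_const_sub_cobounded (p i)).comp
      tendsto_inv₀_nhdsNE_zero)).const_mul (a i)
    simpa [div_eq_mul_inv] using this
  simpa using tendsto_finsetSum s h

end RationalFunctions

/-- The values at one `x` of the functions of a logarithmic reduction: primed fields stand for
derivatives in `x`, and `abar`, `Wb`, `ubar'` for the barred quantities. -/
structure LogReductionData (ι : Type*) where
  r : ℂ
  r' : ℂ
  u' : ℂ
  ubar' : ℂ
  a : ι → ℂ
  abar : ι → ℂ
  W : ι → ℂ
  Wb : ι → ℂ
  W' : ι → ℂ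
  Wb' : ι → ℂ

namespace LogReductionData

noncomputable section

variable {ι : Type*} (d : LogReductionData ι) (s : Finset ι)

def Zw (w : ℂ) : ℂ := d.r + ∑ i ∈ s, d.a i / (w - d.W i)

def Zx (w : ℂ) : ℂ := d.r' * w + d.u' + ∑ i ∈ s, d.a i * d.W' i / (d.W i - w)

def Zbw (w : ℂ) : ℂ := -d.r / w ^ 2 + ∑ i ∈ s, d.abar i / (w ^ 2 * (d.Wb i - 1 / w))

def Zbx (w : ℂ) : ℂ := d.r' / w + d.ubar' + ∑ i ∈ s, d.abar i * d.Wb' i / (d.Wb i - 1 / w)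

def StringEq : Prop :=
  ∀ w : ℂ, w ≠ 0 → (∀ j ∈ s, w ≠ d.W j) → (∀ j ∈ s, w ≠ (d.Wb j)⁻¹) →
    w * d.Zw s w * d.Zbx s w - w * d.Zx s w * d.Zbw s w = 1

/-- The substitution `w ↦ 1/w`, which exchanges `z` and `z̄`. -/
def swap : LogReductionData ι :=
  ⟨d.r, d.r', d.ubar', d.u', d.abar, d.a, d.Wb, d.W, d.Wb', d.W'⟩

variable {d s}

theorem Zbw_inv {v : ℂ} (hv : v ≠ 0) : d.Zbw s v⁻¹ = -v ^ 2 * d.swap.Zw s v := by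
  simp only [Zbw, Zw, swap, mul_add, mul_sum]
  congr 1
  · field_simp
  · refine sum_congr rfl fun i _ => ?_
    rw [one_div, inv_inv, div_eq_mul_inv, div_eq_mul_inv, mul_inv, inv_pow, inv_inv, ← neg_sub v,
      inv_neg]
    ring

theorem Zw_inv {v : ℂ} (hv : v ≠ 0) : d.Zw s v⁻¹ = -v ^ 2 * d.swap.Zbw s v := by
  simp only [Zbw, Zw, swap, mul_add, mul_sum]
  congr 1
  · field_simp
  · refine sum_congr rfl fun i _ => ?_
    rw [one_div, div_eq_mul_inv, div_eq_mul_inv, mul_inv, ← neg_sub v⁻¹, inv_neg]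
    field_simp

theorem Zx_inv (v : ℂ) : d.Zx s v⁻¹ = d.swap.Zbx s v := by
  simp only [Zx, Zbx, swap, div_eq_mul_inv, one_mul]

theorem Zbx_inv (v : ℂ) : d.Zbx s v⁻¹ = d.swap.Zx s v := by
  simp only [Zx, Zbx, swap, inv_inv, div_eq_mul_inv, one_mul]

theorem StringEq.swap (h : d.StringEq s) : d.swap.StringEq s := by
  intro v hv hWb hW
  have h' := h v⁻¹ (inv_ne_zero hv) (fun j hj hvj => hW j hj (inv_eq_iff_eq_inv.1 hvj))
    (fun j hj hvj => hWb j hj (inv_injective hvj))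
  rw [Zw_inv hv, Zbw_inv hv, Zx_inv, Zbx_inv] at h'
  field_simp at h'
  linear_combination h'

theorem StringEq.eventually (h : d.StringEq s) (c : ℂ) :
    ∀ᶠ w in 𝓝[≠] c, w * d.Zw s w * d.Zbx s w - w * d.Zx s w * d.Zbw s w = 1 := by
  have hpoles : ({0} ∪ d.W '' s ∪ (fun j => (d.Wb j)⁻¹) '' s : Set ℂ).Finite :=
    ((Set.finite_singleton 0).union (s.finite_toSet.image _)).union (s.finite_toSet.image _)
  filter_upwards [nhdsNE_of_nhdsNE_sdiff_finite univ_mem hpoles.to_subtype] with w hw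
  simp only [Set.mem_sdiff, Set.mem_univ, Set.mem_union, Set.mem_singleton_iff, Set.mem_image,
    mem_coe, not_or, not_exists, not_and, true_and] at hw
  exact h w hw.1.1 (fun j hj hwj => hw.1.2 j hj hwj.symm) fun j hj hwj => hw.2 j hj hwj.symm

theorem continuousAt_Zbx {c : ℂ} (hc : c ≠ 0) (hWb : ∀ i ∈ s, c * d.Wb i ≠ 1) :
    ContinuousAt (d.Zbx s) c :=
  ((continuousAt_const.div continuousAt_id hc).add continuousAt_const).add <|
    tendsto_finsetSum s fun i hi => continuousAt_const.div
      (continuousAt_const.sub (continuousAt_const.div continuousAt_id hc))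
      (sub_one_div_ne_zero hc (hWb i hi))

theorem continuousAt_Zbw {c : ℂ} (hc : c ≠ 0) (hWb : ∀ i ∈ s, c * d.Wb i ≠ 1) :
    ContinuousAt (d.Zbw s) c :=
  (continuousAt_const.div (continuousAt_id.pow 2) (pow_ne_zero 2 hc)).add <|
    tendsto_finsetSum s fun i hi => continuousAt_const.div
      ((continuousAt_id.pow 2).mul
        (continuousAt_const.sub (continuousAt_const.div continuousAt_id hc)))
      (mul_ne_zero (pow_ne_zero 2 hc) (sub_one_div_ne_zero hc (hWb i hi)))

theorem continuousAt_Zw {c : ℂ} (hc : ∀ i ∈ s, c ≠ d.W i) : ContinuousAt (d.Zw s) c :=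
  continuousAt_const.add (continuousAt_sum_div_sub hc)

theorem hasDerivAt_Zx {c : ℂ} (hc : ∀ i ∈ s, c ≠ d.W i) :
    HasDerivAt (d.Zx s) (d.r' + ∑ i ∈ s, d.a i * d.W' i / (d.W i - c) ^ 2) c := by
  have hpole : ∀ i ∈ s, HasDerivAt (fun w => d.a i * d.W' i / (d.W i - w))
      (d.a i * d.W' i / (d.W i - c) ^ 2) c := fun i hi =>
    ((hasDerivAt_const c _).div ((hasDerivAt_id' c).const_sub _) (sub_ne_zero.2 (hc i hi).symm)
      ).congr_deriv (by ring)
  exact ((((hasDerivAt_id' c).const_mul d.r').add_const d.u').add (HasDerivAt.fun_sum hpole)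
    ).congr_deriv (by ring)

theorem tendsto_sub_mul_Zw [DecidableEq ι] {j : ι} (hj : j ∈ s)
    (hW : ∀ i ∈ s, i ≠ j → d.W i ≠ d.W j) :
    Tendsto (fun w => (w - d.W j) * d.Zw s w) (𝓝[≠] d.W j) (𝓝 (d.a j)) := by
  simpa [Zw, mul_add] using
    (tendsto_sub_mul_nhdsNE continuousAt_const).add (tendsto_sub_mul_sum_div_sub hj hW)

theorem tendsto_sub_mul_Zx [DecidableEq ι] {j : ι} (hj : j ∈ s)
    (hW : ∀ i ∈ s, i ≠ j → d.W i ≠ d.W j) :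
    Tendsto (fun w => (w - d.W j) * d.Zx s w) (𝓝[≠] d.W j) (𝓝 (-(d.a j * d.W' j))) := by
  have hsum (w : ℂ) : ∑ i ∈ s, d.a i * d.W' i / (d.W i - w) =
      ∑ i ∈ s, -(d.a i * d.W' i) / (w - d.W i) :=
    sum_congr rfl fun i _ => by rw [neg_div, ← div_neg, neg_sub]
  have hpoly : ContinuousAt (fun w => d.r' * w + d.u') (d.W j) := by fun_prop
  simpa [Zx, hsum, mul_add] using
    (tendsto_sub_mul_nhdsNE hpoly).add (tendsto_sub_mul_sum_div_sub hj hW)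

variable (s) in
theorem tendsto_mul_Zbx_nhdsNE_zero : Tendsto (fun w => w * d.Zbx s w) (𝓝[≠] 0) (𝓝 d.r') := by
  have hw : Tendsto (fun w : ℂ => w) (𝓝[≠] 0) (𝓝 0) := tendsto_nhdsWithin_of_tendsto_nhds tendsto_id
  have h := (tendsto_const_nhds (x := d.r')).add ((hw.mul_const d.ubar').add
    (hw.mul (tendsto_sum_div_sub_inv_nhdsNE_zero s (fun i => d.abar i * d.Wb' i) d.Wb)))
  rw [zero_mul, zero_mul, add_zero, add_zero] at h
  refine h.congr' (eventually_mem_nhdsWithin.mono fun w (hw0 : w ≠ 0) => ?_)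
  simp only [Zbx]
  field_simp
  ring

variable (s) in
theorem tendsto_sq_mul_Zbw_nhdsNE_zero :
    Tendsto (fun w => w ^ 2 * d.Zbw s w) (𝓝[≠] 0) (𝓝 (-d.r)) := by
  have h := (tendsto_const_nhds (x := -d.r)).add (tendsto_sum_div_sub_inv_nhdsNE_zero s d.abar d.Wb)
  rw [add_zero] at h
  refine h.congr' (eventually_mem_nhdsWithin.mono fun w (hw0 : w ≠ 0) => ?_)
  simp only [Zbw, mul_add, mul_sum]
  congr 1
  · field_simp
  · exact sum_congr rfl fun i _ => by rw [mul_div_assoc', mul_div_mul_left _ _ (pow_ne_zero 2 hw0)]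

theorem Zbx_add_mul_Zbw (c p : ℂ) :
    d.Zbx s c + p * d.Zbw s c = d.r' / c - d.r * p / c ^ 2 + d.ubar'
      + ∑ l ∈ s, d.abar l * (d.Wb' l + p / c ^ 2) / (d.Wb l - 1 / c) := by
  have hsum : ∑ l ∈ s, d.abar l * (d.Wb' l + p / c ^ 2) / (d.Wb l - 1 / c) =
      ∑ l ∈ s, d.abar l * d.Wb' l / (d.Wb l - 1 / c)
        + p * ∑ l ∈ s, d.abar l / (c ^ 2 * (d.Wb l - 1 / c)) := by
    rw [mul_sum, ← sum_add_distrib]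
    exact sum_congr rfl fun l _ => by rw [div_mul_eq_div_div]; ring
  rw [Zbx, Zbw, hsum]
  ring

theorem StringEq.residue_eq_zero [DecidableEq ι] (h : d.StringEq s) {j : ι} (hj : j ∈ s)
    (hW0 : d.W j ≠ 0) (hW : ∀ i ∈ s, i ≠ j → d.W i ≠ d.W j) (hWWb : ∀ i ∈ s, d.W j * d.Wb i ≠ 1) :
    d.a j * (d.Zbx s (d.W j) + d.W' j * d.Zbw s (d.W j)) = 0 := by
  have hid : Tendsto (fun w : ℂ => w) (𝓝[≠] d.W j) (𝓝 (d.W j)) :=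
    tendsto_nhdsWithin_of_tendsto_nhds tendsto_id
  have hlim := ((hid.mul (d.tendsto_sub_mul_Zw hj hW)).mul
      ((d.continuousAt_Zbx hW0 hWWb).tendsto.mono_left nhdsWithin_le_nhds)).sub
    ((hid.mul (d.tendsto_sub_mul_Zx hj hW)).mul
      ((d.continuousAt_Zbw hW0 hWWb).tendsto.mono_left nhdsWithin_le_nhds))
  have hres := tendsto_nhds_unique_of_eventuallyEq hlim
    (tendsto_sub_mul_nhdsNE (f := fun _ => 1) continuousAt_const)
    ((h.eventually (d.W j)).mono fun w hw => by linear_combination (w - d.W j) * hw)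
  have hres' : d.W j * (d.a j * (d.Zbx s (d.W j) + d.W' j * d.Zbw s (d.W j))) = 0 := by
    linear_combination hres
  exact (mul_eq_zero.1 hres').resolve_left hW0

theorem StringEq.Zx_zero_eq_zero (h : d.StringEq s) (hr : d.r ≠ 0) (hW0 : ∀ i ∈ s, d.W i ≠ 0) :
    d.Zx s 0 = 0 := by
  have hW0' : ∀ i ∈ s, (0 : ℂ) ≠ d.W i := fun i hi => (hW0 i hi).symm
  have hid : Tendsto (fun w : ℂ => w) (𝓝[≠] 0) (𝓝 0) :=
    tendsto_nhdsWithin_of_tendsto_nhds tendsto_id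
  have hlim := ((((d.continuousAt_Zw hW0').tendsto.mono_left nhdsWithin_le_nhds).mul
      (d.tendsto_mul_Zbx_nhdsNE_zero s)).mul hid).sub
    (((d.hasDerivAt_Zx hW0').continuousAt.tendsto.mono_left nhdsWithin_le_nhds).mul
      (d.tendsto_sq_mul_Zbw_nhdsNE_zero s))
  have hres := tendsto_nhds_unique_of_eventuallyEq hlim hid
    ((h.eventually 0).mono fun w hw => by linear_combination w * hw)
  have hres' : d.r * d.Zx s 0 = 0 := by linear_combination hres
  exact (mul_eq_zero.1 hres').resolve_left hr

theorem StringEq.constant_term (h : d.StringEq s) (hr : d.r ≠ 0) (hW0 : ∀ i ∈ s, d.W i ≠ 0) :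
    2 * d.r * d.r' - d.r' * ∑ i ∈ s, d.a i / d.W i
      + d.r * ∑ i ∈ s, d.a i * d.W' i / d.W i ^ 2 = 1 := by
  have hW0' : ∀ i ∈ s, (0 : ℂ) ≠ d.W i := fun i hi => (hW0 i hi).symm
  have hslope : Tendsto (fun w => d.Zx s w / w) (𝓝[≠] 0)
      (𝓝 (d.r' + ∑ i ∈ s, d.a i * d.W' i / (d.W i - 0) ^ 2)) := by
    simpa [slope_fun_def_field, h.Zx_zero_eq_zero hr hW0] using
      hasDerivAt_iff_tendsto_slope.1 (d.hasDerivAt_Zx hW0')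
  have hlim := (((d.continuousAt_Zw hW0').tendsto.mono_left nhdsWithin_le_nhds).mul
      (d.tendsto_mul_Zbx_nhdsNE_zero s)).sub (hslope.mul (d.tendsto_sq_mul_Zbw_nhdsNE_zero s))
  have hres := tendsto_nhds_unique_of_eventuallyEq hlim (tendsto_const_nhds (x := (1 : ℂ)))
    (((h.eventually 0).and self_mem_nhdsWithin).mono fun w ⟨hw, (hw0 : w ≠ 0)⟩ => by
      have hw2 : d.Zx s w / w * (w ^ 2 * d.Zbw s w) = w * d.Zx s w * d.Zbw s w := by field_simp
      linear_combination hw - hw2)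
  simp only [Zw, zero_sub, sub_zero, div_neg, sum_neg_distrib] at hres
  linear_combination hres

end

end LogReductionData

theorem casimir_unit_speed_log_reduction_general
    (n : ℕ) (a abar : ℕ → ℂ)
    (r : ℝ → ℂ) (W Wb : ℕ → ℝ → ℂ)
    (r' u' ubar' : ℝ → ℂ) (W' Wb' : ℕ → ℝ → ℂ)
    (hr0 : ∀ x, r x ≠ 0)
    (hW0 : ∀ i ∈ Finset.Icc 1 (n + 1), ∀ x : ℝ, W i x ≠ 0)
    (hWb0 : ∀ i ∈ Finset.Icc 1 (n + 1), ∀ x : ℝ, Wb i x ≠ 0)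
    (hWdist : ∀ i ∈ Finset.Icc 1 (n + 1), ∀ j ∈ Finset.Icc 1 (n + 1), i ≠ j →
      ∀ x : ℝ, W i x ≠ W j x)
    (hWbdist : ∀ i ∈ Finset.Icc 1 (n + 1), ∀ j ∈ Finset.Icc 1 (n + 1), i ≠ j →
      ∀ x : ℝ, Wb i x ≠ Wb j x)
    (hWWb : ∀ i ∈ Finset.Icc 1 (n + 1), ∀ j ∈ Finset.Icc 1 (n + 1),
      ∀ x : ℝ, W i x * Wb j x ≠ 1)
    -- the rational (in w) partial derivatives of z and z̄
    (Zw Zx Zbw Zbx : ℝ → ℂ → ℂ)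
    (hZw : ∀ x w, Zw x w = r x + ∑ i ∈ Finset.Icc 1 (n + 1), a i / (w - W i x))
    (hZx : ∀ x w, Zx x w =
      r' x * w + u' x + ∑ i ∈ Finset.Icc 1 (n + 1), a i * W' i x / (W i x - w))
    (hZbw : ∀ x w, Zbw x w =
      - r x / w ^ 2 + ∑ i ∈ Finset.Icc 1 (n + 1), abar i / (w ^ 2 * (Wb i x - 1 / w)))
    (hZbx : ∀ x w, Zbx x w =
      r' x / w + ubar' x + ∑ i ∈ Finset.Icc 1 (n + 1), abar i * Wb' i x / (Wb i x - 1 / w))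
    -- the string equation
    (hstring : ∀ (x : ℝ) (w : ℂ), w ≠ 0 → (∀ j ∈ Finset.Icc 1 (n + 1), w ≠ W j x) →
      (∀ j ∈ Finset.Icc 1 (n + 1), w ≠ (Wb j x)⁻¹) →
      w * Zw x w * Zbx x w - w * Zx x w * Zbw x w = 1)
    (D Db : ℕ → ℝ → ℂ)
    (hD : ∀ j x, D j x =
      a j * (r' x / W j x - r x * W' j x / (W j x) ^ 2 + ubar' x
        + ∑ l ∈ Finset.Icc 1 (n + 1),
            abar l * (Wb' l x + W' j x / (W j x) ^ 2) / (Wb l x - 1 / W j x)))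
    (hDb : ∀ j x, Db j x =
      abar j * (r' x / Wb j x - r x * Wb' j x / (Wb j x) ^ 2 + u' x
        + ∑ l ∈ Finset.Icc 1 (n + 1),
            a l * (W' l x + Wb' j x / (Wb j x) ^ 2) / (W l x - 1 / Wb j x))) :
    ∀ x : ℝ,
      2 * r x * r' x - (1 / 2) * ∑ j ∈ Finset.Icc 1 (n + 1),
        (r' x * (a j / W j x + abar j / Wb j x)
          - r x * (a j * W' j x / (W j x) ^ 2 + abar j * Wb' j x / (Wb j x) ^ 2)
          + D j x + Db j x) = 1 := by
  intro x
  let d : LogReductionData ℕ :=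
    ⟨r x, r' x, u' x, ubar' x, a, abar, (W · x), (Wb · x), (W' · x), (Wb' · x)⟩
  have hd : d.StringEq (Icc 1 (n + 1)) := fun w hw0 hW hWb => by
    have := hstring x w hw0 hW hWb
    rwa [hZw, hZx, hZbw, hZbx] at this
  have hD0 : ∀ j ∈ Icc 1 (n + 1), D j x = 0 := fun j hj => by
    have := hd.residue_eq_zero hj (hW0 j hj x) (fun i hi hij => hWdist i hi j hj hij x)
      fun i hi => hWWb j hj i hi x
    rw [LogReductionData.Zbx_add_mul_Zbw] at this
    rw [hD]
    exact this
  have hDb0 : ∀ j ∈ Icc 1 (n + 1), Db j x = 0 := fun j hj => by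
    have := hd.swap.residue_eq_zero hj (hWb0 j hj x) (fun i hi hij => hWbdist i hi j hj hij x)
      fun i hi => mul_comm (W i x) (Wb j x) ▸ hWWb i hi j hj x
    rw [LogReductionData.Zbx_add_mul_Zbw] at this
    rw [hDb]
    exact this
  have h1 := hd.constant_term (hr0 x) fun i hi => hW0 i hi x
  have h2 := hd.swap.constant_term (hr0 x) fun i hi => hWb0 i hi x
  dsimp only [d, LogReductionData.swap] at h1 h2
  simp only [sum_add_distrib, sum_sub_distrib, sum_eq_zero hD0, sum_eq_zero hDb0, ← mul_sum]
  linear_combination (h1 + h2) / 2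

/-- under the string equation the Casimir
`Q = r² − (1/2)Σ_j ( r(a_j/w_j + ā_j/w̄_j) + I_j + Ī_j )` of the logarithmic
reduction satisfies `dQ/dx = 1`; here `D_j` and `D̄_j` are the `x`-derivatives of
`I_j = a_j·z̄(1/w_j)` and `Ī_j = ā_j·z(1/w̄_j)`. -/
theorem casimir_unit_speed_log_reduction
    (n : ℕ) (a abar : ℕ → ℂ)
    (r u ubar : ℝ → ℂ) (W Wb : ℕ → ℝ → ℂ)
    (r' u' ubar' : ℝ → ℂ) (W' Wb' : ℕ → ℝ → ℂ)
    (ha : ∀ i ∈ Finset.Icc 1 (n + 1), a i ≠ 0)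
    (habar : ∀ i ∈ Finset.Icc 1 (n + 1), abar i ≠ 0)
    (hasum : ∑ i ∈ Finset.Icc 1 (n + 1), a i = 0)
    (habarsum : ∑ i ∈ Finset.Icc 1 (n + 1), abar i = 0)
    (hr0 : ∀ x, r x ≠ 0)
    (hW0 : ∀ i ∈ Finset.Icc 1 (n + 1), ∀ x : ℝ, W i x ≠ 0)
    (hWb0 : ∀ i ∈ Finset.Icc 1 (n + 1), ∀ x : ℝ, Wb i x ≠ 0)
    (hWdist : ∀ i ∈ Finset.Icc 1 (n + 1), ∀ j ∈ Finset.Icc 1 (n + 1), i ≠ j →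
      ∀ x : ℝ, W i x ≠ W j x)
    (hWbdist : ∀ i ∈ Finset.Icc 1 (n + 1), ∀ j ∈ Finset.Icc 1 (n + 1), i ≠ j →
      ∀ x : ℝ, Wb i x ≠ Wb j x)
    (hWWb : ∀ i ∈ Finset.Icc 1 (n + 1), ∀ j ∈ Finset.Icc 1 (n + 1),
      ∀ x : ℝ, W i x * Wb j x ≠ 1)
    (hdr : ∀ x, HasDerivAt r (r' x) x)
    (hdu : ∀ x, HasDerivAt u (u' x) x)
    (hdubar : ∀ x, HasDerivAt ubar (ubar' x) x)
    (hdW : ∀ i ∈ Finset.Icc 1 (n + 1), ∀ x, HasDerivAt (W i) (W' i x) x)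
    (hdWb : ∀ i ∈ Finset.Icc 1 (n + 1), ∀ x, HasDerivAt (Wb i) (Wb' i x) x)
    -- the rational (in w) partial derivatives of z and z̄
    (Zw Zx Zbw Zbx : ℝ → ℂ → ℂ)
    (hZw : ∀ x w, Zw x w = r x + ∑ i ∈ Finset.Icc 1 (n + 1), a i / (w - W i x))
    (hZx : ∀ x w, Zx x w =
      r' x * w + u' x + ∑ i ∈ Finset.Icc 1 (n + 1), a i * W' i x / (W i x - w))
    (hZbw : ∀ x w, Zbw x w =
      - r x / w ^ 2 + ∑ i ∈ Finset.Icc 1 (n + 1), abar i / (w ^ 2 * (Wb i x - 1 / w)))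
    (hZbx : ∀ x w, Zbx x w =
      r' x / w + ubar' x + ∑ i ∈ Finset.Icc 1 (n + 1), abar i * Wb' i x / (Wb i x - 1 / w))
    -- the string equation
    (hstring : ∀ (x : ℝ) (w : ℂ), w ≠ 0 → (∀ j ∈ Finset.Icc 1 (n + 1), w ≠ W j x) →
      (∀ j ∈ Finset.Icc 1 (n + 1), w ≠ (Wb j x)⁻¹) →
      w * Zw x w * Zbx x w - w * Zx x w * Zbw x w = 1)
    (D Db : ℕ → ℝ → ℂ)
    (hD : ∀ j x, D j x =
      a j * (r' x / W j x - r x * W' j x / (W j x) ^ 2 + ubar' x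
        + ∑ l ∈ Finset.Icc 1 (n + 1),
            abar l * (Wb' l x + W' j x / (W j x) ^ 2) / (Wb l x - 1 / W j x)))
    (hDb : ∀ j x, Db j x =
      abar j * (r' x / Wb j x - r x * Wb' j x / (Wb j x) ^ 2 + u' x
        + ∑ l ∈ Finset.Icc 1 (n + 1),
            a l * (W' l x + Wb' j x / (Wb j x) ^ 2) / (W l x - 1 / Wb j x))) :
    ∀ x : ℝ,
      2 * r x * r' x - (1 / 2) * ∑ j ∈ Finset.Icc 1 (n + 1),
        (r' x * (a j / W j x + abar j / Wb j x)
          - r x * (a j * W' j x / (W j x) ^ 2 + abar j * Wb' j x / (Wb j x) ^ 2)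
          + D j x + Db j x) = 1 :=
  casimir_unit_speed_log_reduction_general n a abar r W Wb r' u' ubar' W' Wb' hr0 hW0 hWb0 hWdist
    hWbdist hWWb Zw Zx Zbw Zbx hZw hZx hZbw hZbx hstring D Db hD hDb
end
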